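/- For all z₁, z₂, y₁, y₂, y₃, z₁′, z₂′, y₁′, y₂′, y₃′ ∈ ℂ and s₁, s₂, s₁′, s₂′ ∈ ℝ one has K( ν̂(z₁,z₂,s₁,−s₂,y₁,y₂,y₃), ν̂(z₁′,z₂′,s₁′,−s₂′,y₁′,y₂′,y₃′) ) = K( ν(z₁,z₂,s₁,s₂,y₁,y₂,y₃), ν(z₁′,z₂′,s₁′,s₂′,y₁′,y₂′,y₃′) ). In other words, the real-linear bijection 𝔫 → 𝔫̂ sending ν(z₁,z₂,s₁,s₂,y₁,y₂,y₃) to ν̂(z₁,z₂,s₁,−s₂,y₁,y₂,y₃) is an isometry for the form K. -/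

import Mathlib

open Matrix

/-- The form `K(V,W) = ½·Re tr(V·W)`. -/
noncomputable def Kform (V W : Matrix (Fin 3 ⊕ Fin 3) (Fin 3 ⊕ Fin 3) ℂ) : ℝ :=
  (Matrix.trace (V * W)).re / 2

/-- `ν(z₁,z₂,s₁,s₂,y₁,y₂,y₃)`: the block matrix `[[X, −Y],[Ȳ, X̄]]` with
`X` having rows `(0, z₁, is₁)`, `(z₂, 0, −conj z₁)`, `(is₂, −conj z₂, 0)` and
`Y` having rows `(y₁, y₂, 0)`, `(y₃, 0, y₂)`, `(0, y₃, y₁)`. -/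
noncomputable def nuMat (z₁ z₂ : ℂ) (s₁ s₂ : ℝ) (y₁ y₂ y₃ : ℂ) :
    Matrix (Fin 3 ⊕ Fin 3) (Fin 3 ⊕ Fin 3) ℂ :=
  Matrix.fromBlocks
    (!![0, z₁, Complex.I * (s₁ : ℂ);
        z₂, 0, -(starRingEnd ℂ) z₁;
        Complex.I * (s₂ : ℂ), -(starRingEnd ℂ) z₂, 0])
    (-(!![y₁, y₂, 0; y₃, 0, y₂; 0, y₃, y₁]))
    ((!![y₁, y₂, 0; y₃, 0, y₂; 0, y₃, y₁]).map (starRingEnd ℂ))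
    ((!![0, z₁, Complex.I * (s₁ : ℂ);
        z₂, 0, -(starRingEnd ℂ) z₁;
        Complex.I * (s₂ : ℂ), -(starRingEnd ℂ) z₂, 0]).map (starRingEnd ℂ))

/-- `ν̂(x₁,x₂,a₁,a₂,w₁,w₂,w₃)`: the block matrix `[[X, −Y],[Ȳ, X̄]]` with
`X` having rows `(0, x₁, a₁)`, `(x₂, 0, conj x₁)`, `(a₂, conj x₂, 0)` and
`Y` having rows `(w₁, w₂, 0)`, `(w₃, 0, −w₂)`, `(0, −w₃, −w₁)`. -/
noncomputable def nuHat (x₁ x₂ : ℂ) (a₁ a₂ : ℝ) (w₁ w₂ w₃ : ℂ) :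
    Matrix (Fin 3 ⊕ Fin 3) (Fin 3 ⊕ Fin 3) ℂ :=
  Matrix.fromBlocks
    (!![0, x₁, (a₁ : ℂ);
        x₂, 0, (starRingEnd ℂ) x₁;
        (a₂ : ℂ), (starRingEnd ℂ) x₂, 0])
    (-(!![w₁, w₂, 0; w₃, 0, -w₂; 0, -w₃, -w₁]))
    ((!![w₁, w₂, 0; w₃, 0, -w₂; 0, -w₃, -w₁]).map (starRingEnd ℂ))
    ((!![0, x₁, (a₁ : ℂ);
        x₂, 0, (starRingEnd ℂ) x₁;
        (a₂ : ℂ), (starRingEnd ℂ) x₂, 0]).map (starRingEnd ℂ))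

/-!
Both `ν` and `ν̂` have the shape `[[X, -Y], [Ȳ, X̄]]`. For two matrices of this shape the
off-diagonal and conjugated blocks of the product contribute complex conjugates of the
diagonal ones, so `K` only sees `Re tr(X X') - Re tr(Y Ȳ')`. Passing from `ν` to `ν̂` flips the
signs of matching entries in pairs and replaces `(i s₁)(i s₂')` by `s₁ (-s₂')`, so neither
trace changes.
-/

namespace Matrix

theorem trace_fromBlocks {n m R : Type*} [Fintype n] [Fintype m] [AddCommMonoid R]
    (A : Matrix n n R) (B : Matrix n m R) (C : Matrix m n R) (D : Matrix m m R) :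
    trace (fromBlocks A B C D) = trace A + trace D := by
  simp [trace, Fintype.sum_sum_type]

variable {n R : Type*} [Fintype n] [CommRing R] [StarRing R]

/-- `[[X, -Y], [Ȳ, X̄]]`, the complex form of the quaternionic matrix `X + Y j`. -/
def quatBlock (X Y : Matrix n n R) : Matrix (n ⊕ n) (n ⊕ n) R :=
  fromBlocks X (-Y) (Y.map (starRingEnd R)) (X.map (starRingEnd R))

theorem trace_map_star_mul (A B : Matrix n n R) :
    trace (A.map (starRingEnd R) * B.map (starRingEnd R)) = starRingEnd R (trace (A * B)) := by
  rw [← Matrix.map_mul, AddMonoidHom.map_trace]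

theorem trace_quatBlock_mul (X Y X' Y' : Matrix n n R) :
    trace (quatBlock X Y * quatBlock X' Y') =
      (trace (X * X') - trace (Y * Y'.map (starRingEnd R))) +
        starRingEnd R (trace (X * X') - trace (Y * Y'.map (starRingEnd R))) := by
  have hYY : trace (Y.map (starRingEnd R) * Y') =
      starRingEnd R (trace (Y * Y'.map (starRingEnd R))) := by
    rw [← trace_map_star_mul, map_map]
    simp only [Function.comp_def, starRingEnd_self_apply, map_id']
  simp only [quatBlock, fromBlocks_multiply, trace_fromBlocks, trace_add, neg_mul, mul_neg,
    trace_neg, trace_map_star_mul, hYY, map_sub]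
  ring

end Matrix

open Matrix

theorem Kform_quatBlock (X Y X' Y' : Matrix (Fin 3) (Fin 3) ℂ) :
    Kform (quatBlock X Y) (quatBlock X' Y') =
      (trace (X * X') - trace (Y * Y'.map (starRingEnd ℂ))).re := by
  rw [Kform, trace_quatBlock_mul, Complex.add_re, Complex.conj_re]
  ring

def nuX (z₁ z₂ : ℂ) (s₁ s₂ : ℝ) : Matrix (Fin 3) (Fin 3) ℂ :=
  !![0, z₁, Complex.I * (s₁ : ℂ);
     z₂, 0, -(starRingEnd ℂ) z₁;
     Complex.I * (s₂ : ℂ), -(starRingEnd ℂ) z₂, 0]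

def nuY (y₁ y₂ y₃ : ℂ) : Matrix (Fin 3) (Fin 3) ℂ :=
  !![y₁, y₂, 0; y₃, 0, y₂; 0, y₃, y₁]

def nuHatX (x₁ x₂ : ℂ) (a₁ a₂ : ℝ) : Matrix (Fin 3) (Fin 3) ℂ :=
  !![0, x₁, (a₁ : ℂ);
     x₂, 0, (starRingEnd ℂ) x₁;
     (a₂ : ℂ), (starRingEnd ℂ) x₂, 0]

def nuHatY (w₁ w₂ w₃ : ℂ) : Matrix (Fin 3) (Fin 3) ℂ :=
  !![w₁, w₂, 0; w₃, 0, -w₂; 0, -w₃, -w₁]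

theorem nuMat_eq_quatBlock (z₁ z₂ : ℂ) (s₁ s₂ : ℝ) (y₁ y₂ y₃ : ℂ) :
    nuMat z₁ z₂ s₁ s₂ y₁ y₂ y₃ = quatBlock (nuX z₁ z₂ s₁ s₂) (nuY y₁ y₂ y₃) :=
  rfl

theorem nuHat_eq_quatBlock (x₁ x₂ : ℂ) (a₁ a₂ : ℝ) (w₁ w₂ w₃ : ℂ) :
    nuHat x₁ x₂ a₁ a₂ w₁ w₂ w₃ = quatBlock (nuHatX x₁ x₂ a₁ a₂) (nuHatY w₁ w₂ w₃) :=
  rfl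

theorem trace_nuHatX_mul (z₁ z₂ z₁' z₂' : ℂ) (s₁ s₂ s₁' s₂' : ℝ) :
    trace (nuHatX z₁ z₂ s₁ (-s₂) * nuHatX z₁' z₂' s₁' (-s₂')) =
      trace (nuX z₁ z₂ s₁ s₂ * nuX z₁' z₂' s₁' s₂') := by
  simp only [nuHatX, nuX, trace_fin_three, mul_apply, Fin.sum_univ_three, of_apply, cons_val',
    cons_val_zero, cons_val_one, cons_val_two, empty_val', cons_val_fin_one, head_cons,
    tail_cons, head_fin_const]
  push_cast
  linear_combination -(↑s₁ * ↑s₂' + ↑s₂ * ↑s₁' : ℂ) * Complex.I_sq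

theorem trace_nuHatY_mul_map_conj (y₁ y₂ y₃ y₁' y₂' y₃' : ℂ) :
    trace (nuHatY y₁ y₂ y₃ * (nuHatY y₁' y₂' y₃').map (starRingEnd ℂ)) =
      trace (nuY y₁ y₂ y₃ * (nuY y₁' y₂' y₃').map (starRingEnd ℂ)) := by
  simp only [nuHatY, nuY, trace_fin_three, mul_apply, Fin.sum_univ_three, map_apply, of_apply,
    cons_val', cons_val_zero, cons_val_one, cons_val_two, empty_val', cons_val_fin_one,
    head_cons, tail_cons, head_fin_const, map_neg, map_zero]
  ring

theorem stmt18
    (z₁ z₂ : ℂ) (s₁ s₂ : ℝ) (y₁ y₂ y₃ : ℂ)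
    (z₁' z₂' : ℂ) (s₁' s₂' : ℝ) (y₁' y₂' y₃' : ℂ) :
    Kform (nuHat z₁ z₂ s₁ (-s₂) y₁ y₂ y₃) (nuHat z₁' z₂' s₁' (-s₂') y₁' y₂' y₃')
      = Kform (nuMat z₁ z₂ s₁ s₂ y₁ y₂ y₃) (nuMat z₁' z₂' s₁' s₂' y₁' y₂' y₃') := by
  rw [nuHat_eq_quatBlock, nuHat_eq_quatBlock, nuMat_eq_quatBlock, nuMat_eq_quatBlock,
    Kform_quatBlock, Kform_quatBlock, trace_nuHatX_mul, trace_nuHatY_mul_map_conj]
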